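/- Let X ∈ Sp(2p,2n) and let Z be in the tangent space at X. With G_X = I - (1/2)·X J_{2p} Xᵀ J_{2n}ᵀ and S = G_X Z (X J_{2p})ᵀ + X J_{2p} (G_X Z)ᵀ, the matrix S is symmetric and satisfies S J_{2n} X = Z. -/
import Mathlib


open Matrix

noncomputable def J (m : ℕ) : Matrix (Fin m ⊕ Fin m) (Fin m ⊕ Fin m) ℝ :=
  Matrix.fromBlocks 0 1 (-1) 0

lemma J_transpose (m : ℕ) : (_root_.J m)ᵀ = -(_root_.J m) := by
  ext (i | i) (j | j) <;>
    simp [_root_.J, Matrix.fromBlocks_transpose, Matrix.one_apply, eq_comm]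

lemma J_mul_J (m : ℕ) : _root_.J m * _root_.J m = -1 := by
  rw [_root_.J, Matrix.fromBlocks_multiply]
  ext (i | i) (j | j) <;>
    simp [Matrix.one_apply]

theorem sp_tangent_SJX_param (p n : ℕ)
    (X Z : Matrix (Fin n ⊕ Fin n) (Fin p ⊕ Fin p) ℝ)
    (hX : Xᵀ * J n * X = J p)
    (hZ : Zᵀ * J n * X + Xᵀ * J n * Z = 0) :
    let G : Matrix (Fin n ⊕ Fin n) (Fin n ⊕ Fin n) ℝ :=
      1 - (1 / 2 : ℝ) • (X * J p * Xᵀ * (J n)ᵀ)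
    let S : Matrix (Fin n ⊕ Fin n) (Fin n ⊕ Fin n) ℝ :=
      G * Z * (X * J p)ᵀ + (X * J p) * (G * Z)ᵀ
    Sᵀ = S ∧ S * J n * X = Z := by
  intro G S
  set K := J n with hKdef
  set L := J p with hLdef
  have hK : Kᵀ = -K := J_transpose n
  have hL : Lᵀ = -L := J_transpose p
  have hLL : L * L = -1 := J_mul_J p
  have hLtL : Lᵀ * L = 1 := by rw [hL, Matrix.neg_mul, hLL, neg_neg]
  have hZ' : Zᵀ * K * X = -(Xᵀ * K * Z) := by
    exact eq_neg_of_add_eq_zero_left hZ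
  constructor
  · show (G * Z * (X * L)ᵀ + (X * L) * (G * Z)ᵀ)ᵀ
        = G * Z * (X * L)ᵀ + (X * L) * (G * Z)ᵀ
    simp only [Matrix.transpose_add, Matrix.transpose_mul,
      Matrix.transpose_transpose]
    rw [add_comm]
  · have h1 : (X * L)ᵀ * (K * X) = 1 := by
      calc (X * L)ᵀ * (K * X) = Lᵀ * (Xᵀ * K * X) := by
            simp only [Matrix.transpose_mul, Matrix.mul_assoc]
        _ = 1 := by rw [hX, hLtL]
    have h2 : Gᵀ * (K * X) = (1 / 2 : ℝ) • (K * X) := by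
      show (1 - (1 / 2 : ℝ) • (X * L * Xᵀ * Kᵀ))ᵀ * (K * X) = _
      have e : (X * L * Xᵀ * Kᵀ)ᵀ * (K * X) = K * X := by
        calc (X * L * Xᵀ * Kᵀ)ᵀ * (K * X)
            = K * (X * (Lᵀ * (Xᵀ * K * X))) := by
              simp only [Matrix.transpose_mul, Matrix.transpose_transpose,
                Matrix.mul_assoc]
          _ = K * X := by rw [hX, hLtL, Matrix.mul_one]
      rw [Matrix.transpose_sub, Matrix.transpose_smul, Matrix.transpose_one,
        Matrix.sub_mul, Matrix.one_mul, Matrix.smul_mul, e]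
      ext i j
      simp [Matrix.sub_apply, Matrix.smul_apply]
      ring
    have hGZ : G * Z = Z + (1 / 2 : ℝ) • (X * L * Xᵀ * K * Z) := by
      show (1 - (1 / 2 : ℝ) • (X * L * Xᵀ * Kᵀ)) * Z = _
      rw [Matrix.sub_mul, Matrix.one_mul, Matrix.smul_mul, hK]
      simp only [Matrix.mul_neg, Matrix.neg_mul, smul_neg, sub_neg_eq_add]
    show (G * Z * (X * L)ᵀ + (X * L) * (G * Z)ᵀ) * K * X = Z
    calc (G * Z * (X * L)ᵀ + (X * L) * (G * Z)ᵀ) * K * X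
        = G * Z * ((X * L)ᵀ * (K * X)) + (X * L) * (Zᵀ * (Gᵀ * (K * X))) := by
          simp only [Matrix.add_mul, Matrix.transpose_mul, Matrix.mul_assoc]
      _ = G * Z + (1 / 2 : ℝ) • ((X * L) * (Zᵀ * (K * X))) := by
          rw [h1, h2, Matrix.mul_one, Matrix.mul_smul, Matrix.mul_smul]
      _ = G * Z + (1 / 2 : ℝ) • ((X * L) * (-(Xᵀ * K * Z))) := by
          rw [← Matrix.mul_assoc Zᵀ, hZ']
      _ = Z := by
          rw [hGZ]
          simp only [Matrix.mul_neg, smul_neg, Matrix.mul_assoc]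
          abel
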